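/- Let P be a periodic pattern of length m over {0,…,σ−1} satisfying pend(P) ≤ m. Then: (1) for every nonempty string S over {0,…,σ−1}, if the longest common prefix of P and S has length ≥ pend(P) (in particular, if P is a prefix of S), then S is periodic and it holds pend(S) = pend(P), L-tail(S) = L-tail(P), pendfull(S) = pendfull(P), L-exp(S) = L-exp(P), and type(S) = type(P); (2) if j ∈ Occ(P,T), then j ∈ R and it holds rend(j) − j = pend(P) − 1, L-tail(j) = L-tail(P), rendfull(j) − j = pendfull(P) − 1, L-exp(j) = L-exp(P), and type(j) = type(P). -/

import Mathlib

open scoped Classical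

namespace CSA

/-- Character of a 1-indexed string at position `i` (junk value 0 out of range). -/
def idx (S : List ℕ) (i : ℕ) : ℕ := S.getD (i - 1) 0

/-- Substring `S[i..j)` in the 1-indexed, half-open convention. -/
def sub (S : List ℕ) (i j : ℕ) : List ℕ := (S.drop (i - 1)).take (j - i)

/-- Suffix `S[i..|S|]` (1-indexed). -/
def suf (S : List ℕ) (i : ℕ) : List ℕ := S.drop (i - 1)

/-- Length of the longest common prefix of two strings. -/
def lcp (A B : List ℕ) : ℕ := ((A.zip B).takeWhile fun p => p.1 == p.2).length

/-- `LCE T j₁ j₂` is the length of the longest common prefix of `T[j₁..n]` and `T[j₂..n]`. -/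
def LCE (T : List ℕ) (j₁ j₂ : ℕ) : ℕ := lcp (suf T j₁) (suf T j₂)

/-- `p` is a period of `S`. -/
def IsPeriod (S : List ℕ) (p : ℕ) : Prop :=
  1 ≤ p ∧ p ≤ S.length ∧ ∀ i, i + p < S.length → S.getD i 0 = S.getD (i + p) 0

/-- The shortest period of `S`. -/
noncomputable def per (S : List ℕ) : ℕ := sInf {p | IsPeriod S p}

/-- `R = {i ∈ [1..n−3τ+2] : per(T[i..i+3τ−1)) ≤ τ/3}`. -/
noncomputable def R (T : List ℕ) (τ : ℕ) : Set ℕ :=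
  {i | 1 ≤ i ∧ i + 3 * τ ≤ T.length + 2 ∧ 3 * per (sub T i (i + 3 * τ - 1)) ≤ τ}

/-- `rend(j) = min{j′ ≥ j : j′ ∉ R} + 3τ − 2`. -/
noncomputable def rend (T : List ℕ) (τ j : ℕ) : ℕ :=
  sInf {j' | j ≤ j' ∧ j' ∉ R T τ} + 3 * τ - 2

/-- `L-root(j)`: lexicographically smallest among `{T[j+t..j+t+p) : 0 ≤ t < p}`
where `p = per(T[j..j+3τ−1))`. -/
noncomputable def Lroot (T : List ℕ) (τ j : ℕ) : List ℕ :=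
  WithTop.untopD [] (((Finset.range (per (sub T j (j + 3 * τ - 1)))).image fun t =>
      sub T (j + t) (j + t + per (sub T j (j + 3 * τ - 1)))).min)

/-- `L-head(j)`: the (unique) `s ∈ [0..p)` with `T[j+s..j+s+p) = L-root(j)`. -/
noncomputable def Lhead (T : List ℕ) (τ j : ℕ) : ℕ :=
  sInf {s | s < per (sub T j (j + 3 * τ - 1)) ∧
    sub T (j + s) (j + s + per (sub T j (j + 3 * τ - 1))) = Lroot T τ j}

noncomputable def Lexp (T : List ℕ) (τ j : ℕ) : ℕ :=
  (rend T τ j - j - Lhead T τ j) / per (sub T j (j + 3 * τ - 1))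

noncomputable def Ltail (T : List ℕ) (τ j : ℕ) : ℕ :=
  (rend T τ j - j - Lhead T τ j) % per (sub T j (j + 3 * τ - 1))

noncomputable def rendfull (T : List ℕ) (τ j : ℕ) : ℕ := rend T τ j - Ltail T τ j

/-- `type(j) = +1` if `rend(j) ≤ n` and `T[rend(j)] > T[rend(j)−p]`, and `−1` otherwise. -/
noncomputable def typ (T : List ℕ) (τ j : ℕ) : ℤ :=
  if rend T τ j ≤ T.length ∧
      idx T (rend T τ j - per (sub T j (j + 3 * τ - 1))) < idx T (rend T τ j)
    then 1 else -1

noncomputable def Rminus (T : List ℕ) (τ : ℕ) : Set ℕ := {j ∈ R T τ | typ T τ j = -1}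

noncomputable def RH (T : List ℕ) (τ : ℕ) (H : List ℕ) : Set ℕ :=
  {j ∈ R T τ | Lroot T τ j = H}

noncomputable def RsH (T : List ℕ) (τ s : ℕ) (H : List ℕ) : Set ℕ :=
  {j ∈ R T τ | Lroot T τ j = H ∧ Lhead T τ j = s}

noncomputable def RminusH (T : List ℕ) (τ : ℕ) (H : List ℕ) : Set ℕ :=
  Rminus T τ ∩ RH T τ H

noncomputable def RminusSH (T : List ℕ) (τ s : ℕ) (H : List ℕ) : Set ℕ :=
  Rminus T τ ∩ RsH T τ s H

noncomputable def Rprime (T : List ℕ) (τ : ℕ) : Set ℕ := {j ∈ R T τ | j - 1 ∉ R T τ}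

/-- `Occ(P,S)`: the set of (1-indexed) starting positions of occurrences of `P` in `S`. -/
def OccSet (P S : List ℕ) : Set ℕ :=
  {j | 1 ≤ j ∧ j + P.length ≤ S.length + 1 ∧ sub S j (j + P.length) = P}

noncomputable def RangeBeg (P T : List ℕ) : ℕ :=
  Set.ncard {i | 1 ≤ i ∧ i ≤ T.length ∧ suf T i < P}

noncomputable def RangeEnd (P T : List ℕ) : ℕ := RangeBeg P T + (OccSet P T).ncard

/-- `ISA[j]`: the lexicographic rank of the suffix `T[j..n]` among all suffixes of `T`. -/
noncomputable def ISA (T : List ℕ) (j : ℕ) : ℕ :=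
  Set.ncard {j' | 1 ≤ j' ∧ j' ≤ T.length ∧ suf T j' ≤ suf T j}

/-- `succ_S(i) = min{j ∈ S ∪ {n−2τ+2} : j ≥ i}`. -/
noncomputable def succS (T : List ℕ) (τ : ℕ) (Sync : Set ℕ) (i : ℕ) : ℕ :=
  sInf {j | i ≤ j ∧ (j ∈ Sync ∨ j = T.length + 2 - 2 * τ)}

/-- The set `D` of distinguishing prefixes. -/
noncomputable def Dset (T : List ℕ) (τ : ℕ) (Sync : Set ℕ) : Set (List ℕ) :=
  {X | ∃ i, 1 ≤ i ∧ i + 3 * τ ≤ T.length + 2 ∧ i ∉ R T τ ∧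
    X = sub T i (succS T τ Sync i + 2 * τ)}

/-- `T^∞[i] = T[1 + ((i−1) mod n)]` for `i : ℤ`. -/
def tinf (T : List ℕ) (i : ℤ) : ℕ := idx T (((i - 1).emod (T.length : ℤ)).toNat + 1)

/-- `W[i]`: the reverse of `T^∞[s^lex_i − τ .. s^lex_i + 2τ)`. -/
def Wstr (T : List ℕ) (τ : ℕ) (slex : ℕ → ℕ) (i : ℕ) : List ℕ :=
  ((List.range (3 * τ)).map fun k => tinf T ((slex i : ℤ) - (τ : ℤ) + (k : ℤ))).reverse

/- Pattern versions of the `L`-decomposition functions. -/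

noncomputable def perP (τ : ℕ) (P : List ℕ) : ℕ := per (P.take (3 * τ - 1))

/-- A pattern is periodic if `|P| ≥ 3τ−1` and `per(P[1..3τ−1]) ≤ τ/3`. -/
noncomputable def Periodic (τ : ℕ) (P : List ℕ) : Prop :=
  3 * τ - 1 ≤ P.length ∧ 3 * perP τ P ≤ τ

noncomputable def pend (τ : ℕ) (P : List ℕ) : ℕ :=
  1 + perP τ P + lcp P (P.drop (perP τ P))

noncomputable def LrootP (τ : ℕ) (P : List ℕ) : List ℕ :=
  WithTop.untopD [] (((Finset.range (perP τ P)).image fun t => (P.drop t).take (perP τ P)).min)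

noncomputable def LheadP (τ : ℕ) (P : List ℕ) : ℕ :=
  sInf {s | s < perP τ P ∧ (P.drop s).take (perP τ P) = LrootP τ P}

noncomputable def LexpP (τ : ℕ) (P : List ℕ) : ℕ :=
  (pend τ P - 1 - LheadP τ P) / perP τ P

noncomputable def LtailP (τ : ℕ) (P : List ℕ) : ℕ :=
  (pend τ P - 1 - LheadP τ P) % perP τ P

noncomputable def pendfullP (τ : ℕ) (P : List ℕ) : ℕ := pend τ P - LtailP τ P

noncomputable def typP (τ : ℕ) (P : List ℕ) : ℤ :=
  if pend τ P ≤ P.length ∧ idx P (pend τ P - perP τ P) < idx P (pend τ P)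
    then 1 else -1

/-- `pow(H)`: the prefix of length `|H|·⌈τ/|H|⌉` of `H^∞`. -/
def powS (τ : ℕ) (H : List ℕ) : List ℕ :=
  (List.replicate ((τ + H.length - 1) / H.length) H).flatten

/-!
A periodic pattern is determined, as far as its run data go, by its prefix of length `pend`:
the period `p`, the `L`-root and the `L`-head are read off the first `3τ - 1 ≥ 2p` characters,
and `pend - 1` is the first position where the period `p` breaks. Hence any string sharing this
prefix has the same data, which is part (1).

For an occurrence of `P` at `j`, part (1) applies to the suffix `T[j..n]`, and it remains to see
that the run of `R` starting at `j` ends exactly where the period breaks: every window of length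
`3τ - 1` before the break inherits the period `p`, while the window ending at the break has no
period `q ≤ τ/3`, since `p` and `q` would commute on it and repair the break.
-/

section Lcp

variable {A B : List ℕ}

lemma lcp_cons (a b : ℕ) (A B : List ℕ) :
    lcp (a :: A) (b :: B) = if a = b then lcp A B + 1 else 0 := by
  by_cases hab : a = b <;> simp [lcp, hab]

lemma lcp_self (A : List ℕ) : lcp A A = A.length := by
  induction A with
  | nil => rfl
  | cons a A ih => simp [lcp_cons, ih]

lemma lcp_le_length_left (A B : List ℕ) : lcp A B ≤ A.length := by
  induction A generalizing B with
  | nil => simp [lcp]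
  | cons a A ih =>
    cases B with
    | nil => simp [lcp]
    | cons b B => rw [lcp_cons]; split <;> simp [ih B]

lemma lcp_le_length_right (A B : List ℕ) : lcp A B ≤ B.length := by
  induction A generalizing B with
  | nil => simp [lcp]
  | cons a A ih =>
    cases B with
    | nil => simp [lcp]
    | cons b B => rw [lcp_cons]; split <;> simp [ih B]

lemma getD_eq_of_lt_lcp {i : ℕ} (hi : i < lcp A B) : A.getD i 0 = B.getD i 0 := by
  induction A generalizing B i with
  | nil => simp [lcp] at hi
  | cons a A ih =>
    cases B with
    | nil => simp [lcp] at hi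
    | cons b B =>
      rw [lcp_cons] at hi
      split at hi
      · cases i with
        | zero => simp_all
        | succ i => simpa using ih (by omega)
      · omega

lemma getD_ne_of_lcp_lt (hA : lcp A B < A.length) (hB : lcp A B < B.length) :
    A.getD (lcp A B) 0 ≠ B.getD (lcp A B) 0 := by
  induction A generalizing B with
  | nil => simp at hA
  | cons a A ih =>
    cases B with
    | nil => simp at hB
    | cons b B =>
      by_cases hab : a = b
      · simp only [lcp_cons, if_pos hab, List.length_cons] at *
        simpa using ih (by omega) (by omega)
      · simp [lcp_cons, hab]

lemma le_lcp {k : ℕ} (hA : k ≤ A.length) (hB : k ≤ B.length)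
    (h : ∀ i < k, A.getD i 0 = B.getD i 0) : k ≤ lcp A B := by
  by_contra! hlt
  exact getD_ne_of_lcp_lt (by omega) (by omega) (h _ hlt)

lemma lcp_eq_of_getD_ne {k : ℕ} (hA : k < A.length) (hB : k < B.length)
    (h : ∀ i < k, A.getD i 0 = B.getD i 0) (hk : A.getD k 0 ≠ B.getD k 0) : lcp A B = k := by
  have := le_lcp hA.le hB.le h
  by_contra hne
  exact hk (getD_eq_of_lt_lcp (by omega))

lemma take_eq_take_of_le_lcp {k : ℕ} (h : k ≤ lcp A B) : A.take k = B.take k := by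
  have hA := lcp_le_length_left A B
  have hB := lcp_le_length_right A B
  refine List.ext_getElem (by simp; omega) fun i hi _ => ?_
  have hik : i < k := by simp at hi; omega
  have := getD_eq_of_lt_lcp (A := A) (B := B) (i := i) (by omega)
  rw [List.getD_eq_getElem _ _ (by omega), List.getD_eq_getElem _ _ (by omega)] at this
  simpa using this

end Lcp

lemma getD_drop (L : List ℕ) (a i : ℕ) : (L.drop a).getD i 0 = L.getD (a + i) 0 := by
  simp [List.getD_eq_getElem?_getD]

lemma getD_take (L : List ℕ) {i k : ℕ} (h : i < k) : (L.take k).getD i 0 = L.getD i 0 := by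
  simp [List.getD_eq_getElem?_getD, h]

section TakeEq

variable {S P : List ℕ} {k : ℕ}

lemma getD_eq_of_take_eq (h : S.take k = P.take k) {i : ℕ} (hi : i < k) :
    S.getD i 0 = P.getD i 0 := by
  rw [← getD_take S hi, h, getD_take P hi]

lemma drop_take_eq_of_take_eq (h : S.take k = P.take k) {t l : ℕ} (htl : t + l ≤ k) :
    (S.drop t).take l = (P.drop t).take l := by
  have key : ((S.take k).drop t).take l = ((P.take k).drop t).take l := by rw [h]
  simpa [List.drop_take, List.take_take, show min l (k - t) = l by omega] using key

end TakeEq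

section Pattern

variable {τ : ℕ} {S : List ℕ}

lemma isPeriod_per_of_pos {W : List ℕ} (h : 0 < per W) : IsPeriod W (per W) :=
  Nat.sInf_mem (Nat.nonempty_of_pos_sInf h)

lemma per_pos {W : List ℕ} (h : W ≠ []) : 0 < per W :=
  (Nat.sInf_mem (s := {p | IsPeriod W p})
    ⟨W.length, List.length_pos_iff.mpr h, le_rfl, fun i hi => by omega⟩).1

lemma perP_lt_pend (τ : ℕ) (S : List ℕ) : perP τ S < pend τ S := by
  unfold pend
  omega

lemma lcp_drop_perP (τ : ℕ) (S : List ℕ) :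
    lcp S (S.drop (perP τ S)) = pend τ S - 1 - perP τ S := by
  unfold pend
  omega

lemma perP_pos_of_pend_le (h : pend τ S ≤ S.length) : 0 < perP τ S := by
  by_contra! h0
  have : pend τ S = 1 + S.length := by
    simp [pend, show perP τ S = 0 by omega, lcp_self]
  omega

lemma getD_add_perP {i : ℕ} (hi : i + perP τ S < pend τ S - 1) :
    S.getD i 0 = S.getD (i + perP τ S) 0 := by
  rw [getD_eq_of_lt_lcp (B := S.drop (perP τ S)) (by rw [lcp_drop_perP]; omega), getD_drop,
    Nat.add_comm]

lemma getD_ne_at_pend (h : pend τ S ≤ S.length) :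
    S.getD (pend τ S - 1 - perP τ S) 0 ≠ S.getD (pend τ S - 1) 0 := by
  have hpe := perP_lt_pend τ S
  have hmis := getD_ne_of_lcp_lt (A := S) (B := S.drop (perP τ S))
    (by rw [lcp_drop_perP]; omega) (by rw [lcp_drop_perP, List.length_drop]; omega)
  rwa [getD_drop, lcp_drop_perP,
    show perP τ S + (pend τ S - 1 - perP τ S) = pend τ S - 1 by omega] at hmis

lemma three_mul_le_pend (hS : Periodic τ S) (hp : 0 < perP τ S) : 3 * τ ≤ pend τ S := by
  obtain ⟨-, hle, hper⟩ : IsPeriod (S.take (3 * τ - 1)) (perP τ S) := isPeriod_per_of_pos hp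
  have hlen := hS.1
  have hwin : (S.take (3 * τ - 1)).length = 3 * τ - 1 := by simp [hlen]
  rw [hwin] at hle hper
  have : 3 * τ - 1 - perP τ S ≤ lcp S (S.drop (perP τ S)) := by
    refine le_lcp (by omega) (by simp; omega) fun i hi => ?_
    have := hper i (by omega)
    rwa [getD_take _ (by omega), getD_take _ (by omega), Nat.add_comm, ← getD_drop] at this
  unfold pend
  omega

end Pattern

section PrefixCongr

variable {τ k : ℕ} {S P : List ℕ}

lemma perP_eq_of_take_eq (h : S.take k = P.take k) (hk : 3 * τ - 1 ≤ k) :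
    perP τ S = perP τ P := by
  have key : (S.take k).take (3 * τ - 1) = (P.take k).take (3 * τ - 1) := by rw [h]
  simp only [List.take_take, show min (3 * τ - 1) k = 3 * τ - 1 by omega] at key
  rw [perP, perP, key]

lemma LrootP_eq_of_take_eq (h : S.take k = P.take k) (hp : perP τ S = perP τ P)
    (hk : 2 * perP τ P ≤ k) : LrootP τ S = LrootP τ P := by
  unfold LrootP
  rw [hp]
  congr 2
  refine Finset.image_congr fun t ht => drop_take_eq_of_take_eq h ?_
  simp only [Finset.coe_range, Set.mem_Iio] at ht
  omega

lemma LheadP_eq_of_take_eq (h : S.take k = P.take k) (hp : perP τ S = perP τ P)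
    (hk : 2 * perP τ P ≤ k) : LheadP τ S = LheadP τ P := by
  unfold LheadP
  rw [hp, LrootP_eq_of_take_eq h hp hk]
  congr 1
  ext s
  refine and_congr_right fun hs => ?_
  rw [drop_take_eq_of_take_eq h (by omega)]

lemma idx_eq_of_take_eq (h : S.take k = P.take k) {x : ℕ} (hx : x - 1 < k) : idx S x = idx P x :=
  getD_eq_of_take_eq h hx

lemma pend_eq_of_take_eq (hP : Periodic τ P) (hpend : pend τ P ≤ P.length)
    (hS : pend τ P ≤ S.length) (h : S.take (pend τ P) = P.take (pend τ P)) :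
    pend τ S = pend τ P := by
  have hp0 := perP_pos_of_pend_le hpend
  have hp := perP_eq_of_take_eq (τ := τ) h (by have := three_mul_le_pend hP hp0; omega)
  have hpe := perP_lt_pend τ P
  have hag : ∀ i < pend τ P, S.getD i 0 = P.getD i 0 := fun i hi => getD_eq_of_take_eq h hi
  have hl : lcp S (S.drop (perP τ S)) = pend τ P - 1 - perP τ P := by
    rw [hp]
    refine lcp_eq_of_getD_ne (by omega) (by simp only [List.length_drop]; omega)
      (fun i hi => ?_) ?_
    · rw [getD_drop, hag i (by omega), hag _ (by omega), Nat.add_comm,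
        getD_add_perP (τ := τ) (by omega)]
    · rw [getD_drop, hag _ (by omega), hag _ (by omega),
        show perP τ P + (pend τ P - 1 - perP τ P) = pend τ P - 1 by omega]
      exact getD_ne_at_pend hpend
  rw [pend, hl, hp]
  omega

theorem patternData_eq_of_take_eq (hP : Periodic τ P) (hpend : pend τ P ≤ P.length)
    (hS : pend τ P ≤ S.length) (h : S.take (pend τ P) = P.take (pend τ P)) :
    Periodic τ S ∧ pend τ S = pend τ P ∧ LtailP τ S = LtailP τ P ∧
      pendfullP τ S = pendfullP τ P ∧ LexpP τ S = LexpP τ P ∧ typP τ S = typP τ P := by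
  have hp3 := hP.2
  have hpe := perP_lt_pend τ P
  have he := three_mul_le_pend hP (perP_pos_of_pend_le hpend)
  have hp : perP τ S = perP τ P := perP_eq_of_take_eq h (by omega)
  have hpendS := pend_eq_of_take_eq hP hpend hS h
  have hhead := LheadP_eq_of_take_eq h hp (by omega)
  have htail : LtailP τ S = LtailP τ P := by rw [LtailP, LtailP, hp, hpendS, hhead]
  refine ⟨⟨by omega, hp ▸ hp3⟩, hpendS, htail, by rw [pendfullP, pendfullP, hpendS, htail],
    by rw [LexpP, LexpP, hp, hpendS, hhead], ?_⟩
  unfold typP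
  rw [hp, hpendS, idx_eq_of_take_eq h (x := pend τ P) (by omega),
    idx_eq_of_take_eq h (x := pend τ P - perP τ P) (by omega)]
  simp only [hS, hpend, true_and]

end PrefixCongr

section RunEnd

variable {τ : ℕ} {S : List ℕ}

lemma perP_drop_le_perP (hpend : pend τ S ≤ S.length) {d : ℕ} (hd : d + 3 * τ ≤ pend τ S) :
    perP τ (S.drop d) ≤ perP τ S := by
  obtain ⟨hp1, hle, -⟩ : IsPeriod (S.take (3 * τ - 1)) (perP τ S) :=
    isPeriod_per_of_pos (perP_pos_of_pend_le hpend)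
  have hwin : ((S.drop d).take (3 * τ - 1)).length = 3 * τ - 1 := by simp; omega
  simp only [List.length_take] at hle
  refine Nat.sInf_le (s := {p | IsPeriod ((S.drop d).take (3 * τ - 1)) p})
    ⟨hp1, by omega, fun i hi => ?_⟩
  rw [hwin] at hi
  rw [getD_take _ (by omega), getD_take _ hi, getD_drop, getD_drop, ← Nat.add_assoc]
  exact getD_add_perP (by omega)

lemma lt_three_mul_perP_drop_at_pend (hS : Periodic τ S) (hpend : pend τ S ≤ S.length) :
    τ < 3 * perP τ (S.drop (pend τ S - 3 * τ + 1)) := by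
  set e := pend τ S
  set p := perP τ S
  set d := e - 3 * τ + 1
  set W := (S.drop d).take (3 * τ - 1)
  have hp3 := hS.2
  have hp0 : 0 < p := perP_pos_of_pend_le hpend
  have he : 3 * τ ≤ e := three_mul_le_pend hS hp0
  have hWlen : W.length = 3 * τ - 1 := by simp [W]; omega
  by_contra! hq3
  change 3 * per W ≤ τ at hq3
  have hq0 : 0 < per W := per_pos (by rw [← List.length_pos_iff]; omega)
  obtain ⟨-, -, hq⟩ := isPeriod_per_of_pos hq0
  have hWq : ∀ i, d ≤ i → i + per W < e → S.getD i 0 = S.getD (i + per W) 0 := by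
    intro i hdi hi
    have := hq (i - d) (by omega)
    rwa [getD_take _ (by omega), getD_take _ (by omega), getD_drop, getD_drop,
      show d + (i - d) = i by omega, show d + (i - d + per W) = i + per W by omega] at this
  -- with `q = per W`: `S[e-1] = S[e-1-q] = S[e-1-q-p] = S[e-1-p]`, against `getD_ne_at_pend`
  have h1 := hWq (e - 1 - per W) (by omega) (by omega)
  have h2 := hWq (e - 1 - p - per W) (by omega) (by omega)
  have h3 := getD_add_perP (τ := τ) (S := S) (i := e - 1 - p - per W) (by omega)
  rw [show e - 1 - per W + per W = e - 1 by omega] at h1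
  rw [show e - 1 - p - per W + per W = e - 1 - p by omega] at h2
  rw [show e - 1 - p - per W + perP τ S = e - 1 - per W by omega] at h3
  exact getD_ne_at_pend hpend (by rw [← h2, h3, h1])

end RunEnd

section Text

variable {T : List ℕ} {τ j : ℕ}

lemma sub_eq_take_suf (T : List ℕ) (i l : ℕ) : sub T i l = (suf T i).take (l - i) := rfl

lemma length_suf (T : List ℕ) (j : ℕ) : (suf T j).length = T.length - (j - 1) :=
  List.length_drop

lemma drop_suf (hj : 1 ≤ j) (d : ℕ) : (suf T j).drop d = suf T (j + d) := by
  rw [suf, suf, List.drop_drop, show j - 1 + d = j + d - 1 by omega]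

lemma sub_add_eq_take_drop_suf (hj : 1 ≤ j) (t l : ℕ) :
    sub T (j + t) (j + t + l) = ((suf T j).drop t).take l := by
  rw [sub_eq_take_suf, drop_suf hj, Nat.add_sub_cancel_left]

lemma idx_suf (hj : 1 ≤ j) {i : ℕ} (hi : 1 ≤ i) : idx (suf T j) i = idx T (j + i - 1) := by
  rw [idx, idx, suf, getD_drop, show j - 1 + (i - 1) = j + i - 1 - 1 by omega]

lemma per_sub_eq_perP_suf (T : List ℕ) (τ j : ℕ) :
    per (sub T j (j + 3 * τ - 1)) = perP τ (suf T j) := by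
  rw [sub_eq_take_suf, perP, Nat.sub_right_comm, Nat.add_sub_cancel_left]

lemma mem_R_iff (hj : 1 ≤ j) :
    j ∈ R T τ ↔ j + 3 * τ ≤ T.length + 2 ∧ 3 * perP τ (suf T j) ≤ τ := by
  rw [← per_sub_eq_perP_suf T τ j]
  exact ⟨fun h => h.2, fun h => ⟨hj, h⟩⟩

lemma Lroot_eq_LrootP_suf (hj : 1 ≤ j) : Lroot T τ j = LrootP τ (suf T j) := by
  simp only [Lroot, LrootP, per_sub_eq_perP_suf T τ j, sub_add_eq_take_drop_suf hj]

lemma Lhead_eq_LheadP_suf (hj : 1 ≤ j) : Lhead T τ j = LheadP τ (suf T j) := by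
  simp only [Lhead, LheadP, per_sub_eq_perP_suf T τ j, sub_add_eq_take_drop_suf hj,
    Lroot_eq_LrootP_suf hj]

lemma rend_eq_of_periodic_suf (hj : 1 ≤ j) (hS : Periodic τ (suf T j))
    (hpend : pend τ (suf T j) ≤ (suf T j).length) : rend T τ j = j + pend τ (suf T j) - 1 := by
  have hp0 := perP_pos_of_pend_le hpend
  have hp3 := hS.2
  have he := three_mul_le_pend hS hp0
  have hSlen := length_suf T j
  set S := suf T j
  have hin : ∀ d, d + 3 * τ ≤ pend τ S → j + d ∈ R T τ := fun d hd => by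
    refine (mem_R_iff (by omega)).2 ⟨by omega, ?_⟩
    rw [← drop_suf hj]
    exact (Nat.mul_le_mul_left 3 (perP_drop_le_perP hpend hd)).trans hp3
  have hout : j + (pend τ S - 3 * τ + 1) ∉ R T τ := fun h => by
    have := ((mem_R_iff (by omega)).1 h).2
    rw [← drop_suf hj] at this
    exact absurd this (not_le.2 (lt_three_mul_perP_drop_at_pend hS hpend))
  have hfirst : sInf {j' | j ≤ j' ∧ j' ∉ R T τ} = j + (pend τ S - 3 * τ + 1) := by
    refine le_antisymm (Nat.sInf_le ⟨by omega, hout⟩)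
      (le_csInf ⟨_, by omega, hout⟩ fun b ⟨hjb, hb⟩ => ?_)
    by_contra! hlt
    exact hb (by simpa [show j + (b - j) = b by omega] using hin (b - j) (by omega))
  rw [rend, hfirst]
  omega

theorem runData_eq_patternData_suf (hj : 1 ≤ j) (hS : Periodic τ (suf T j))
    (hpend : pend τ (suf T j) ≤ (suf T j).length) :
    j ∈ R T τ ∧ rend T τ j - j = pend τ (suf T j) - 1 ∧
      Ltail T τ j = LtailP τ (suf T j) ∧ rendfull T τ j - j = pendfullP τ (suf T j) - 1 ∧
      Lexp T τ j = LexpP τ (suf T j) ∧ typ T τ j = typP τ (suf T j) := by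
  have hrend := rend_eq_of_periodic_suf hj hS hpend
  have hper := per_sub_eq_perP_suf T τ j
  have hhead := Lhead_eq_LheadP_suf (T := T) (τ := τ) hj
  have hpe := perP_lt_pend τ (suf T j)
  have he := three_mul_le_pend hS (perP_pos_of_pend_le hpend)
  have hSlen := length_suf T j
  set S := suf T j
  have hshift : j + pend τ S - 1 - j - LheadP τ S = pend τ S - 1 - LheadP τ S := by omega
  have htail : Ltail T τ j = LtailP τ S := by rw [Ltail, LtailP, hrend, hper, hhead, hshift]
  have htail_le : LtailP τ S ≤ pend τ S - 1 := (Nat.mod_le _ _).trans (Nat.sub_le _ _)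
  refine ⟨(mem_R_iff hj).2 ⟨by omega, hS.2⟩, by omega, htail,
    by rw [rendfull, pendfullP, htail]; omega,
    by rw [Lexp, LexpP, hrend, hper, hhead, hshift], ?_⟩
  unfold typ typP
  rw [hrend, hper, idx_suf hj (i := pend τ S) (by omega),
    idx_suf hj (i := pend τ S - perP τ S) (by omega),
    show j + (pend τ S - perP τ S) - 1 = j + pend τ S - 1 - perP τ S by omega]
  exact if_congr (and_congr_left' ⟨fun _ => by omega, fun _ => by omega⟩) rfl rfl

end Text

theorem statement_12_general
    (σ τ : ℕ) (T : List ℕ)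
    (P : List ℕ) (m : ℕ) (hm : P.length = m)
    (hperiodic : Periodic τ P) (hpend : pend τ P ≤ m) :
    (∀ S : List ℕ, S ≠ [] → (∀ c ∈ S, c < σ) → pend τ P ≤ lcp P S →
      Periodic τ S ∧ pend τ S = pend τ P ∧ LtailP τ S = LtailP τ P ∧
      pendfullP τ S = pendfullP τ P ∧ LexpP τ S = LexpP τ P ∧
      typP τ S = typP τ P) ∧
    (∀ j ∈ OccSet P T, j ∈ R T τ ∧ rend T τ j - j = pend τ P - 1 ∧
      Ltail T τ j = LtailP τ P ∧ rendfull T τ j - j = pendfullP τ P - 1 ∧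
      Lexp T τ j = LexpP τ P ∧ typ T τ j = typP τ P) := by
  subst hm
  refine ⟨fun S _ _ hlcp => patternData_eq_of_take_eq hperiodic hpend
    (hlcp.trans (lcp_le_length_right P S)) (take_eq_take_of_le_lcp hlcp).symm, ?_⟩
  rintro j ⟨hj, -, hocc⟩
  have hprefix : (suf T j).take P.length = P := by
    rwa [sub_eq_take_suf, Nat.add_sub_cancel_left] at hocc
  have hlenS : pend τ P ≤ (suf T j).length :=
    hpend.trans (hprefix ▸ List.length_take_le' _ _)
  have htake : (suf T j).take (pend τ P) = P.take (pend τ P) := by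
    calc (suf T j).take (pend τ P) = ((suf T j).take P.length).take (pend τ P) := by
          rw [List.take_take, min_eq_left hpend]
      _ = P.take (pend τ P) := by rw [hprefix]
  obtain ⟨hS, hpendS, htail, hfull, hexp, htyp⟩ :=
    patternData_eq_of_take_eq hperiodic hpend hlenS htake
  rw [← hpendS, ← htail, ← hfull, ← hexp, ← htyp]
  exact runData_eq_patternData_suf hj hS (hpendS ▸ hlenS)

/-- Lemma: extensions and occurrences of a periodic pattern with
`pend(P) ≤ m`. -/
theorem statement_12
    (σ n τ : ℕ) (T : List ℕ)
    (hσ : 2 ≤ σ) (hn : 2 ≤ n) (hτ : 1 ≤ τ)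
    (hlen : T.length = n) (halph : ∀ c ∈ T, c < σ)
    (hlast : idx T n = 0) (huniq : ∀ i, 1 ≤ i → i < n → idx T i ≠ 0)
    (P : List ℕ) (m : ℕ) (hm : P.length = m) (halphP : ∀ c ∈ P, c < σ)
    (hperiodic : Periodic τ P) (hpend : pend τ P ≤ m) :
    (∀ S : List ℕ, S ≠ [] → (∀ c ∈ S, c < σ) → pend τ P ≤ lcp P S →
      Periodic τ S ∧ pend τ S = pend τ P ∧ LtailP τ S = LtailP τ P ∧
      pendfullP τ S = pendfullP τ P ∧ LexpP τ S = LexpP τ P ∧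
      typP τ S = typP τ P) ∧
    (∀ j ∈ OccSet P T, j ∈ R T τ ∧ rend T τ j - j = pend τ P - 1 ∧
      Ltail T τ j = LtailP τ P ∧ rendfull T τ j - j = pendfullP τ P - 1 ∧
      Lexp T τ j = LexpP τ P ∧ typ T τ j = typP τ P) :=
  statement_12_general σ τ T P m hm hperiodic hpend
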